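/- arXiv:1911.11048 — 5 statements merged into one kernel-verified Lean document; each statement's English description precedes it below -/
import Mathlib

section
/- Let F be a binary cluster family on a finite set X, i.e., a finite family of nonempty subsets of X such that X ∈ F, {x} ∈ F for every x ∈ X, any two members of F are disjoint or one contains the other, and every member C of F with at least two elements is the union of two disjoint nonempty members of F. For distinct a, b, c ∈ X, say the triple abc is ab-biased in F (written ab|_F c) if some C ∈ F satisfies a ∈ C, b ∈ C and c ∉ C. Then for any three distinct elements a, b, c of X, exactly one of ab|_F c, ac|_F b, bc|_F a holds. -/
/-- A binary cluster family on ground set `X`: the family of clusters (leaf sets of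
subtrees) of a rooted binary phylogenetic tree with leaf set `X`. -/
def IsBinaryClusterFamily {α : Type*} [DecidableEq α]
    (X : Finset α) (F : Finset (Finset α)) : Prop :=
  (∀ C ∈ F, C.Nonempty ∧ C ⊆ X) ∧
  X ∈ F ∧
  (∀ x ∈ X, ({x} : Finset α) ∈ F) ∧
  (∀ C ∈ F, ∀ D ∈ F, Disjoint C D ∨ C ⊆ D ∨ D ⊆ C) ∧
  (∀ C ∈ F, 2 ≤ C.card →
    ∃ C₁ ∈ F, ∃ C₂ ∈ F, C₁.Nonempty ∧ C₂.Nonempty ∧ Disjoint C₁ C₂ ∧ C = C₁ ∪ C₂)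

/-- The triple `xyz` is `xy`-biased in `F` (written `xy|_F z`): some member of `F`
contains `x` and `y` but not `z`. -/
def Biased {α : Type*} [DecidableEq α] (F : Finset (Finset α)) (x y z : α) : Prop :=
  ∃ C ∈ F, x ∈ C ∧ y ∈ C ∧ z ∉ C


/-! Two clusters meeting in a point are nested, so no two of `ab|c`, `ac|b`, `bc|a` can hold
together. Conversely, the smallest cluster containing `a`, `b`, `c` has at least two elements and
splits into two disjoint clusters neither of which contains all three points; two of them on
the same side, together with the third point, witness a bias. -/

section Biased

variable {α : Type*} [DecidableEq α] {F : Finset (Finset α)} {a b c : α}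

theorem biased_comm : Biased F a b c ↔ Biased F b a c := by
  simp only [Biased, and_left_comm]

theorem not_biased_swap_of_nested
    (hF : ∀ C ∈ F, ∀ D ∈ F, Disjoint C D ∨ C ⊆ D ∨ D ⊆ C) :
    Biased F a b c → ¬ Biased F a c b := by
  rintro ⟨C, hCF, haC, hbC, hcC⟩ ⟨D, hDF, haD, hcD, hbD⟩
  rcases hF C hCF D hDF with hCD | hCD | hDC
  · exact Finset.disjoint_left.mp hCD haC haD
  · exact hbD (hCD hbC)
  · exact hcC (hDC hcD)

theorem biased_of_mem_union_of_disjoint {C₁ C₂ : Finset α} (h₁ : C₁ ∈ F) (h₂ : C₂ ∈ F)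
    (hdisj : Disjoint C₁ C₂) (ha : a ∈ C₁ ∪ C₂) (hb : b ∈ C₁ ∪ C₂) (hc : c ∈ C₁ ∪ C₂)
    (hn₁ : ¬ (a ∈ C₁ ∧ b ∈ C₁ ∧ c ∈ C₁)) (hn₂ : ¬ (a ∈ C₂ ∧ b ∈ C₂ ∧ c ∈ C₂)) :
    Biased F a b c ∨ Biased F a c b ∨ Biased F b c a := by
  have h₁₂ {x : α} : x ∈ C₁ → x ∉ C₂ := fun hx => Finset.disjoint_left.mp hdisj hx
  have h₂₁ {x : α} : x ∈ C₂ → x ∉ C₁ := fun hx => Finset.disjoint_right.mp hdisj hx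
  rw [Finset.mem_union] at ha hb hc
  rcases ha with ha | ha <;> rcases hb with hb | hb <;> rcases hc with hc | hc
  · exact absurd ⟨ha, hb, hc⟩ hn₁
  · exact .inl ⟨C₁, h₁, ha, hb, h₂₁ hc⟩
  · exact .inr <| .inl ⟨C₁, h₁, ha, hc, h₂₁ hb⟩
  · exact .inr <| .inr ⟨C₂, h₂, hb, hc, h₁₂ ha⟩
  · exact .inr <| .inr ⟨C₁, h₁, hb, hc, h₂₁ ha⟩
  · exact .inr <| .inl ⟨C₂, h₂, ha, hc, h₁₂ hb⟩
  · exact .inl ⟨C₂, h₂, ha, hb, h₁₂ hc⟩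
  · exact absurd ⟨ha, hb, hc⟩ hn₂

theorem biased_or_of_mem_cluster
    (hsplit : ∀ C ∈ F, 2 ≤ C.card →
      ∃ C₁ ∈ F, ∃ C₂ ∈ F, C₁.Nonempty ∧ C₂.Nonempty ∧ Disjoint C₁ C₂ ∧ C = C₁ ∪ C₂)
    (hab : a ≠ b) {C : Finset α} (hCF : C ∈ F) (ha : a ∈ C) (hb : b ∈ C) (hc : c ∈ C) :
    Biased F a b c ∨ Biased F a c b ∨ Biased F b c a := by
  induction C using Finset.strongInduction with
  | H C ih =>
    obtain ⟨C₁, h₁, C₂, h₂, hne₁, hne₂, hdisj, rfl⟩ :=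
      hsplit C hCF (Finset.one_lt_card.mpr ⟨a, ha, b, hb, hab⟩)
    have hlt₁ : C₁ ⊂ C₁ ∪ C₂ := left_lt_sup.2 fun h =>
      Finset.disjoint_right.mp hdisj hne₂.choose_spec (h hne₂.choose_spec)
    have hlt₂ : C₂ ⊂ C₁ ∪ C₂ := right_lt_sup.2 fun h =>
      Finset.disjoint_left.mp hdisj hne₁.choose_spec (h hne₁.choose_spec)
    by_cases hall₁ : a ∈ C₁ ∧ b ∈ C₁ ∧ c ∈ C₁
    · exact ih C₁ hlt₁ h₁ hall₁.1 hall₁.2.1 hall₁.2.2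
    by_cases hall₂ : a ∈ C₂ ∧ b ∈ C₂ ∧ c ∈ C₂
    · exact ih C₂ hlt₂ h₂ hall₂.1 hall₂.2.1 hall₂.2.2
    exact biased_of_mem_union_of_disjoint h₁ h₂ hdisj ha hb hc hall₁ hall₂

end Biased

theorem biased_trichotomy_general {α : Type*} [DecidableEq α]
    (X : Finset α) (F : Finset (Finset α)) (hF : IsBinaryClusterFamily X F)
    (a b c : α) (ha : a ∈ X) (hb : b ∈ X) (hc : c ∈ X)
    (hab : a ≠ b) :
    (Biased F a b c ∧ ¬ Biased F a c b ∧ ¬ Biased F b c a) ∨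
    (¬ Biased F a b c ∧ Biased F a c b ∧ ¬ Biased F b c a) ∨
    (¬ Biased F a b c ∧ ¬ Biased F a c b ∧ Biased F b c a) := by
  obtain ⟨-, hXF, -, hnested, hsplit⟩ := hF
  have hab_ac : Biased F a b c → ¬ Biased F a c b := not_biased_swap_of_nested hnested
  have hab_bc : Biased F a b c → ¬ Biased F b c a :=
    fun h => not_biased_swap_of_nested hnested (biased_comm.mp h)
  have hac_bc : Biased F a c b → ¬ Biased F b c a :=
    fun h h' => not_biased_swap_of_nested hnested (biased_comm.mp h) (biased_comm.mp h')
  rcases biased_or_of_mem_cluster hsplit hab hXF ha hb hc with h | h | h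
  · exact .inl ⟨h, hab_ac h, hab_bc h⟩
  · exact .inr <| .inl ⟨fun h' => hab_ac h' h, h, hac_bc h⟩
  · exact .inr <| .inr ⟨fun h' => hab_bc h' h, fun h' => hac_bc h' h, h⟩

theorem biased_trichotomy {α : Type*} [DecidableEq α]
    (X : Finset α) (F : Finset (Finset α)) (hF : IsBinaryClusterFamily X F)
    (a b c : α) (ha : a ∈ X) (hb : b ∈ X) (hc : c ∈ X)
    (hab : a ≠ b) (hac : a ≠ c) (hbc : b ≠ c) :
    (Biased F a b c ∧ ¬ Biased F a c b ∧ ¬ Biased F b c a) ∨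
    (¬ Biased F a b c ∧ Biased F a c b ∧ ¬ Biased F b c a) ∨
    (¬ Biased F a b c ∧ ¬ Biased F a c b ∧ Biased F b c a) :=
  biased_trichotomy_general X F hF a b c ha hb hc hab
end

section
/- Let F be a binary cluster family on a finite set X, i.e., a finite family of nonempty subsets of X such that X ∈ F, {x} ∈ F for every x ∈ X, any two members of F are disjoint or one contains the other, and every member C of F with at least two elements is the union of two disjoint nonempty members of F. Let Y be a nonempty subset of X and define the restriction F|Y := {C ∩ Y : C ∈ F, C ∩ Y ≠ ∅}. Then F|Y is a binary cluster family on Y. -/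
/-- The restriction `F|Y = {C ∩ Y : C ∈ F, C ∩ Y ≠ ∅}` of a cluster family to a
leaf subset `Y` (the cluster family of the induced subtree). -/
def Restrict {α : Type*} [DecidableEq α] (F : Finset (Finset α)) (Y : Finset α) :
    Finset (Finset α) :=
  (F.image (· ∩ Y)).filter Finset.Nonempty

/-!
A cluster `C` of `F` with `|C ∩ Y| ≥ 2` splits into two children `C₁, C₂`. If both meet `Y`,
their traces split `C ∩ Y`; otherwise `C ∩ Y` is the trace of one child, a strictly smaller
cluster, and we descend into it. This descent is the suppression of degree-two vertices in
the induced subtree. The remaining axioms pass to traces directly.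
-/

section Restrict

variable {α : Type*} [DecidableEq α] {F : Finset (Finset α)} {Y : Finset α}

lemma mem_restrict {S : Finset α} :
    S ∈ Restrict F Y ↔ (∃ C ∈ F, C ∩ Y = S) ∧ S.Nonempty := by
  simp [Restrict]

lemma inter_mem_restrict {C : Finset α} (hC : C ∈ F) (hCY : (C ∩ Y).Nonempty) :
    C ∩ Y ∈ Restrict F Y :=
  mem_restrict.2 ⟨⟨C, hC, rfl⟩, hCY⟩

lemma exists_split_inter
    (hsplit : ∀ C ∈ F, 2 ≤ C.card → ∃ C₁ ∈ F, ∃ C₂ ∈ F,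
      C₁.Nonempty ∧ C₂.Nonempty ∧ Disjoint C₁ C₂ ∧ C = C₁ ∪ C₂)
    {C : Finset α} (hC : C ∈ F) (hCY : 2 ≤ (C ∩ Y).card) :
    ∃ C₁ ∈ F, ∃ C₂ ∈ F, (C₁ ∩ Y).Nonempty ∧ (C₂ ∩ Y).Nonempty ∧
      Disjoint (C₁ ∩ Y) (C₂ ∩ Y) ∧ C ∩ Y = C₁ ∩ Y ∪ C₂ ∩ Y := by
  induction C using Finset.strongInduction with
  | H C ih =>
    obtain ⟨C₁, hC₁, C₂, hC₂, hne₁, hne₂, hdisj, rfl⟩ :=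
      hsplit _ hC (hCY.trans (Finset.card_le_card Finset.inter_subset_left))
    have hC₁_lt : C₁ ⊂ C₁ ∪ C₂ :=
      (hdisj.symm.right_lt_sup_of_left_ne_bot hne₂.ne_empty).trans_eq (sup_comm _ _)
    have hC₂_lt : C₂ ⊂ C₁ ∪ C₂ := hdisj.right_lt_sup_of_left_ne_bot hne₁.ne_empty
    rw [Finset.union_inter_distrib_right] at hCY ⊢
    by_cases hY₁ : (C₁ ∩ Y).Nonempty
    · by_cases hY₂ : (C₂ ∩ Y).Nonempty
      · exact ⟨C₁, hC₁, C₂, hC₂, hY₁, hY₂,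
          hdisj.mono Finset.inter_subset_left Finset.inter_subset_left, rfl⟩
      · rw [Finset.not_nonempty_iff_eq_empty.1 hY₂, Finset.union_empty] at hCY ⊢
        exact ih C₁ hC₁_lt hC₁ hCY
    · rw [Finset.not_nonempty_iff_eq_empty.1 hY₁, Finset.empty_union] at hCY ⊢
      exact ih C₂ hC₂_lt hC₂ hCY

end Restrict

theorem restrict_isBinaryClusterFamily {α : Type*} [DecidableEq α]
    (X : Finset α) (F : Finset (Finset α)) (hF : IsBinaryClusterFamily X F)
    (Y : Finset α) (hYX : Y ⊆ X) (hY : Y.Nonempty) :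
    IsBinaryClusterFamily Y (Restrict F Y) := by
  obtain ⟨-, hX, hsingleton, hnested, hsplit⟩ := hF
  refine ⟨fun S hS => ?_, ?_, fun x hx => ?_, fun S hS T hT => ?_, fun S hS hS₂ => ?_⟩
  · obtain ⟨⟨C, -, rfl⟩, hne⟩ := mem_restrict.1 hS
    exact ⟨hne, Finset.inter_subset_right⟩
  · exact mem_restrict.2 ⟨⟨X, hX, Finset.inter_eq_right.2 hYX⟩, hY⟩
  · exact mem_restrict.2 ⟨⟨{x}, hsingleton x (hYX hx),
      Finset.inter_eq_left.2 (Finset.singleton_subset_iff.2 hx)⟩, Finset.singleton_nonempty x⟩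
  · obtain ⟨⟨C, hC, rfl⟩, -⟩ := mem_restrict.1 hS
    obtain ⟨⟨D, hD, rfl⟩, -⟩ := mem_restrict.1 hT
    rcases hnested C hC D hD with h | h | h
    · exact .inl (h.mono Finset.inter_subset_left Finset.inter_subset_left)
    · exact .inr (.inl (Finset.inter_subset_inter_right h))
    · exact .inr (.inr (Finset.inter_subset_inter_right h))
  · obtain ⟨⟨C, hC, rfl⟩, -⟩ := mem_restrict.1 hS
    obtain ⟨C₁, hC₁, C₂, hC₂, hY₁, hY₂, hdisj, hunion⟩ := exists_split_inter hsplit hC hS₂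
    exact ⟨_, inter_mem_restrict hC₁ hY₁, _, inter_mem_restrict hC₂ hY₂, hY₁, hY₂, hdisj, hunion⟩
end

section
/- Let F and G be binary cluster families on the same finite set X (each is a finite family of nonempty subsets of X containing X and all singletons, any two members disjoint or nested, and every member with at least two elements the union of two disjoint nonempty members). Let U_P, V_P ∈ F be disjoint nonempty sets with U_P ∪ V_P = X, and let U_Q, V_Q ∈ G be disjoint nonempty sets with U_Q ∪ V_Q = X. Suppose a ∈ U_P ∩ U_Q, b ∈ U_P \ U_Q, and c ∈ X \ U_P. Then a, b, c are pairwise distinct, and the triple abc is a conflict of (F, G), i.e., for some labeling {x, y, z} = {a, b, c} there is a member of exactly one of F, G containing x and y but not z. -/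
/-- The triple `abc` is a conflict of `(F, G)`: for some labeling `{x,y,z} = {a,b,c}`,
the triple is `xy`-biased in exactly one of `F` and `G`. -/
def Conflict {α : Type*} [DecidableEq α] (F G : Finset (Finset α)) (a b c : α) : Prop :=
  ∃ x y z : α, ({x, y, z} : Finset α) = {a, b, c} ∧
    Xor' (Biased F x y z) (Biased G x y z)

/-!
Since `c ∉ U_P`, the root cluster `U_P` witnesses `ab|_F c`. If `c ∉ U_Q`, then `b` and `c`
both lie in `V_Q`; a cluster of `G` containing `a` and `b` meets `V_Q`, cannot lie inside
`V_Q ∌ a`, hence contains `V_Q ∋ c`, so `ab|_G c` fails. If `c ∈ U_Q`, then `U_Q` witnesses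
`ac|_G b`, while no cluster of `F` can contain `a` and `c` without containing all of `U_P ∋ b`.
Both non-biasedness claims are instances of one fact about laminar families: a member `D` with
`x ∉ D` and `y, z ∈ D` rules out `xy|z`.
-/

def IsLaminar {α : Type*} (F : Finset (Finset α)) : Prop :=
  ∀ C ∈ F, ∀ D ∈ F, Disjoint C D ∨ C ⊆ D ∨ D ⊆ C

theorem IsBinaryClusterFamily.isLaminar {α : Type*} [DecidableEq α] {X : Finset α}
    {F : Finset (Finset α)} (hF : IsBinaryClusterFamily X F) : IsLaminar F :=
  hF.2.2.2.1

theorem IsBinaryClusterFamily.subset_of_mem {α : Type*} [DecidableEq α] {X : Finset α}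
    {F : Finset (Finset α)} (hF : IsBinaryClusterFamily X F) {C : Finset α} (hC : C ∈ F) :
    C ⊆ X :=
  (hF.1 C hC).2

section Biased

variable {α : Type*} [DecidableEq α] {F G : Finset (Finset α)} {x y z : α}

theorem Biased.symm (h : Biased F x y z) : Biased F y x z := by
  obtain ⟨C, hC, hx, hy, hz⟩ := h
  exact ⟨C, hC, hy, hx, hz⟩

theorem IsLaminar.not_biased (hF : IsLaminar F) {D : Finset α} (hD : D ∈ F)
    (hx : x ∉ D) (hy : y ∈ D) (hz : z ∈ D) : ¬Biased F x y z := by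
  rintro ⟨C, hC, hxC, hyC, hzC⟩
  rcases hF C hC D hD with hCD | hCD | hDC
  · exact Finset.disjoint_left.mp hCD hyC hy
  · exact hx (hCD hxC)
  · exact hzC (hDC hz)

theorem Conflict.of_biased_left {a b c : α} (hF : Biased F a b c) (hG : ¬Biased G a b c) :
    Conflict F G a b c :=
  ⟨a, b, c, rfl, Or.inl ⟨hF, hG⟩⟩

theorem Conflict.of_biased_right {a b c : α} (hF : ¬Biased F a b c) (hG : Biased G a b c) :
    Conflict F G a b c :=
  ⟨a, b, c, rfl, Or.inr ⟨hG, hF⟩⟩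

theorem Conflict.swap_right {a b c : α} (h : Conflict F G a c b) : Conflict F G a b c := by
  obtain ⟨x, y, z, hxyz, hxor⟩ := h
  exact ⟨x, y, z, by rw [hxyz, Finset.pair_comm], hxor⟩

end Biased

theorem listCommonRootConflicts_correct_general {α : Type*} [DecidableEq α]
    (X : Finset α) (F G : Finset (Finset α))
    (hF : IsBinaryClusterFamily X F) (hG : IsBinaryClusterFamily X G)
    (UP : Finset α) (hUP : UP ∈ F)
    (UQ VQ : Finset α) (hUQ : UQ ∈ G) (hVQ : VQ ∈ G)
    (hQd : Disjoint UQ VQ) (hQu : UQ ∪ VQ = X)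
    (a b c : α) (ha : a ∈ UP ∩ UQ) (hb : b ∈ UP \ UQ) (hc : c ∈ X \ UP) :
    (a ≠ b ∧ a ≠ c ∧ b ≠ c) ∧ Conflict F G a b c := by
  obtain ⟨haP, haQ⟩ := Finset.mem_inter.mp ha
  obtain ⟨hbP, hbQ⟩ := Finset.mem_sdiff.mp hb
  obtain ⟨hcX, hcP⟩ := Finset.mem_sdiff.mp hc
  refine ⟨⟨ne_of_mem_of_not_mem haQ hbQ, ne_of_mem_of_not_mem haP hcP,
    ne_of_mem_of_not_mem hbP hcP⟩, ?_⟩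
  by_cases hcQ : c ∈ UQ
  · exact .swap_right <| .of_biased_right
      (fun h ↦ hF.isLaminar.not_biased hUP hcP haP hbP h.symm) ⟨UQ, hUQ, haQ, hcQ, hbQ⟩
  · have mem_VQ {x : α} (hxX : x ∈ X) (hxQ : x ∉ UQ) : x ∈ VQ := by
      rw [← hQu] at hxX
      exact (Finset.mem_union.mp hxX).resolve_left hxQ
    exact .of_biased_left ⟨UP, hUP, haP, hbP, hcP⟩ <|
      hG.isLaminar.not_biased hVQ (Finset.disjoint_left.mp hQd haQ)
        (mem_VQ (hF.subset_of_mem hUP hbP) hbQ) (mem_VQ hcX hcQ)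

theorem listCommonRootConflicts_correct {α : Type*} [DecidableEq α]
    (X : Finset α) (F G : Finset (Finset α))
    (hF : IsBinaryClusterFamily X F) (hG : IsBinaryClusterFamily X G)
    (UP VP : Finset α) (hUP : UP ∈ F) (hVP : VP ∈ F)
    (hUPn : UP.Nonempty) (hVPn : VP.Nonempty) (hPd : Disjoint UP VP) (hPu : UP ∪ VP = X)
    (UQ VQ : Finset α) (hUQ : UQ ∈ G) (hVQ : VQ ∈ G)
    (hUQn : UQ.Nonempty) (hVQn : VQ.Nonempty) (hQd : Disjoint UQ VQ) (hQu : UQ ∪ VQ = X)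
    (a b c : α) (ha : a ∈ UP ∩ UQ) (hb : b ∈ UP \ UQ) (hc : c ∈ X \ UP) :
    (a ≠ b ∧ a ≠ c ∧ b ≠ c) ∧ Conflict F G a b c :=
  listCommonRootConflicts_correct_general X F G hF hG UP hUP UQ VQ hUQ hVQ hQd hQu a b c ha hb hc
end

section
/- Let F and G be binary cluster families on the same finite set X (each is a finite family of nonempty subsets of X containing X and all singletons, any two members disjoint or nested, and every member with at least two elements the union of two disjoint nonempty members). Let U_P, V_P ∈ F be disjoint nonempty sets with U_P ∪ V_P = X, and let U_Q, V_Q ∈ G be disjoint nonempty sets with U_Q ∪ V_Q = X. Let a, b, c ∈ U_P be pairwise distinct such that either (a ∈ U_Q and b ∈ U_Q and c ∉ U_Q) or (a ∉ U_Q and b ∉ U_Q and c ∈ U_Q). Then abc is a conflict of (F, G) if and only if no member C of F satisfies a ∈ C, b ∈ C and c ∉ C. -/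
theorem listSubtreeConflicts_characterization {α : Type*} [DecidableEq α]
    (X : Finset α) (F G : Finset (Finset α))
    (hF : IsBinaryClusterFamily X F) (hG : IsBinaryClusterFamily X G)
    (UP VP : Finset α) (hUP : UP ∈ F) (hVP : VP ∈ F)
    (hUPn : UP.Nonempty) (hVPn : VP.Nonempty) (hPd : Disjoint UP VP) (hPu : UP ∪ VP = X)
    (UQ VQ : Finset α) (hUQ : UQ ∈ G) (hVQ : VQ ∈ G)
    (hUQn : UQ.Nonempty) (hVQn : VQ.Nonempty) (hQd : Disjoint UQ VQ) (hQu : UQ ∪ VQ = X)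
    (a b c : α) (ha : a ∈ UP) (hb : b ∈ UP) (hc : c ∈ UP)
    (hab : a ≠ b) (hac : a ≠ c) (hbc : b ≠ c)
    (hsplit : (a ∈ UQ ∧ b ∈ UQ ∧ c ∉ UQ) ∨ (a ∉ UQ ∧ b ∉ UQ ∧ c ∈ UQ)) :
    Conflict F G a b c ↔ ¬ Biased F a b c := by
  have hlam := hF.2.2.2.1
  have hXsub : UP ⊆ X := (hF.1 UP hUP).2
  have haX : a ∈ X := hXsub ha
  have hbX : b ∈ X := hXsub hb
  have hcX : c ∈ X := hXsub hc
  -- key fact about G: any D ∈ G containing c together with a (or b) contains all three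
  have key : ∀ D ∈ G, c ∈ D → ((a ∈ D → b ∈ D) ∧ (b ∈ D → a ∈ D)) := by
    intro D hD hcD
    rcases hsplit with ⟨haU, hbU, hcU⟩ | ⟨haU, hbU, hcU⟩
    · constructor
      · intro haD
        rcases hG.2.2.2.1 D hD UQ hUQ with h | h | h
        · exact absurd haU (Finset.disjoint_left.mp h haD)
        · exact absurd (h hcD) hcU
        · exact h hbU
      · intro hbD
        rcases hG.2.2.2.1 D hD UQ hUQ with h | h | h
        · exact absurd hbU (Finset.disjoint_left.mp h hbD)
        · exact absurd (h hcD) hcU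
        · exact h haU
    · have haV : a ∈ VQ := by
        have := Finset.mem_union.mp (hQu ▸ haX); tauto
      have hbV : b ∈ VQ := by
        have := Finset.mem_union.mp (hQu ▸ hbX); tauto
      have hcV : c ∉ VQ := Finset.disjoint_left.mp hQd hcU
      constructor
      · intro haD
        rcases hG.2.2.2.1 D hD VQ hVQ with h | h | h
        · exact absurd haV (Finset.disjoint_left.mp h haD)
        · exact absurd (h hcD) hcV
        · exact h hbV
      · intro hbD
        rcases hG.2.2.2.1 D hD VQ hVQ with h | h | h
        · exact absurd hbV (Finset.disjoint_left.mp h hbD)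
        · exact absurd (h hcD) hcV
        · exact h haV
  have hGab : Biased G a b c := by
    rcases hsplit with ⟨haU, hbU, hcU⟩ | ⟨haU, hbU, hcU⟩
    · exact ⟨UQ, hUQ, haU, hbU, hcU⟩
    · have haV : a ∈ VQ := by
        have := Finset.mem_union.mp (hQu ▸ haX); tauto
      have hbV : b ∈ VQ := by
        have := Finset.mem_union.mp (hQu ▸ hbX); tauto
      exact ⟨VQ, hVQ, haV, hbV, Finset.disjoint_left.mp hQd hcU⟩
  have hGba : Biased G b a c := by
    obtain ⟨D, hD, h1, h2, h3⟩ := hGab; exact ⟨D, hD, h2, h1, h3⟩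
  have hGac : ¬ Biased G a c b := fun ⟨D, hD, h1, h2, h3⟩ => h3 ((key D hD h2).1 h1)
  have hGca : ¬ Biased G c a b := fun ⟨D, hD, h1, h2, h3⟩ => h3 ((key D hD h1).1 h2)
  have hGbc : ¬ Biased G b c a := fun ⟨D, hD, h1, h2, h3⟩ => h3 ((key D hD h2).2 h1)
  have hGcb : ¬ Biased G c b a := fun ⟨D, hD, h1, h2, h3⟩ => h3 ((key D hD h1).2 h2)
  -- exclusivity of biases in a laminar family
  have excl : ∀ p q r : α, Biased F p q r → Biased F p r q → False := by
    rintro p q r ⟨C, hC, hpC, hqC, hrC⟩ ⟨D, hD, hpD, hrD, hqD⟩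
    rcases hlam C hC D hD with h | h | h
    · exact absurd hpD (Finset.disjoint_left.mp h hpC)
    · exact hqD (h hqC)
    · exact hrC (h hrD)
  constructor
  · rintro ⟨x, y, z, hset, hxor⟩ hFab
    have hFba : Biased F b a c := by
      obtain ⟨C, hC, h1, h2, h3⟩ := hFab; exact ⟨C, hC, h2, h1, h3⟩
    have hFac : ¬ Biased F a c b := fun h => excl a b c hFab h
    have hFca : ¬ Biased F c a b := fun ⟨C, hC, h1, h2, h3⟩ =>
      excl a b c hFab ⟨C, hC, h2, h1, h3⟩
    have hFbc : ¬ Biased F b c a := fun h => excl b a c hFba h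
    have hFcb : ¬ Biased F c b a := fun ⟨C, hC, h1, h2, h3⟩ =>
      excl b a c hFba ⟨C, hC, h2, h1, h3⟩
    have hxm : x = a ∨ x = b ∨ x = c := by
      have : x ∈ ({a, b, c} : Finset α) := by rw [← hset]; simp
      simpa using this
    have hym : y = a ∨ y = b ∨ y = c := by
      have : y ∈ ({a, b, c} : Finset α) := by rw [← hset]; simp
      simpa using this
    have hzm : z = a ∨ z = b ∨ z = c := by
      have : z ∈ ({a, b, c} : Finset α) := by rw [← hset]; simp
      simpa using this
    have h3 : ({a, b, c} : Finset α).card = 3 := by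
      rw [Finset.card_insert_of_notMem (by simp [hab, hac]),
        Finset.card_insert_of_notMem (by simp [hbc]), Finset.card_singleton]
    have hcard : ({x, y, z} : Finset α).card = 3 := by rw [hset]; exact h3
    have h2le : ∀ p q : α, ({p, q} : Finset α).card ≤ 2 :=
      fun p q => (Finset.card_insert_le _ _).trans (by simp)
    have hxy : x ≠ y := by
      intro h
      have hsub : ({x, y, z} : Finset α) ⊆ {y, z} := by
        intro w hw; simp at hw ⊢; rcases hw with h' | h' | h' <;> simp [h, h']
      have := (Finset.card_le_card hsub).trans (h2le y z)
      omega
    have hxz : x ≠ z := by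
      intro h
      have hsub : ({x, y, z} : Finset α) ⊆ {y, z} := by
        intro w hw; simp at hw ⊢; rcases hw with h' | h' | h' <;> simp [h, h']
      have := (Finset.card_le_card hsub).trans (h2le y z)
      omega
    have hyz : y ≠ z := by
      intro h
      have hsub : ({x, y, z} : Finset α) ⊆ {x, z} := by
        intro w hw; simp at hw ⊢; rcases hw with h' | h' | h' <;> simp [h, h']
      have := (Finset.card_le_card hsub).trans (h2le x z)
      omega
    simp only [Xor', Xor] at hxor
    rcases hxm with rfl | rfl | rfl <;> rcases hym with rfl | rfl | rfl <;>
      rcases hzm with rfl | rfl | rfl <;> tauto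
  · intro hnF
    exact ⟨a, b, c, rfl, Or.inr ⟨hGab, hnF⟩⟩
end

section
/- Let F and G be binary cluster families on the same finite set X (each is a finite family of nonempty subsets of X containing X and all singletons, any two members disjoint or nested, and every member with at least two elements the union of two disjoint nonempty members). Let U_P, V_P ∈ F be disjoint nonempty sets with U_P ∪ V_P = X, and let U_Q, V_Q ∈ G be disjoint nonempty sets with U_Q ∪ V_Q = X. Let abc be a conflict of (F, G), i.e., for some labeling {x, y, z} = {a, b, c} some member of exactly one of F, G contains x and y but not z. Then at least one of the following holds: (i) {a, b, c} is contained in no member of F other than X; (ii) {a, b, c} is contained in no member of G other than X; (iii) there is exactly one set Y among U_P ∩ U_Q, U_P ∩ V_Q, V_P ∩ U_Q, V_P ∩ V_Q with {a, b, c} ⊆ Y, and abc is a conflict of the restricted pair (F|Y, G|Y), where F|Y := {C ∩ Y : C ∈ F, C ∩ Y ≠ ∅} and G|Y := {C ∩ Y : C ∈ G, C ∩ Y ≠ ∅}. -/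
/-!
A conflict triple `{a, b, c}` that touches neither root lies in some non-root cluster `C` of `F`
and some non-root cluster `D` of `G`. By laminarity a non-root cluster lies inside one of the two
root children, so `{a, b, c} ⊆ C ∩ D` sits in one of the four intersections, and in only one since
these are pairwise disjoint. Restricting to a set containing the triple does not change which
pairs of it are separated from the third element, so the conflict survives the restriction.
-/

section

open Finset

variable {α : Type*} [DecidableEq α]

lemma subset_or_subset_of_subset_union {C U V : Finset α}
    (hCU : Disjoint C U ∨ C ⊆ U ∨ U ⊆ C) (hCV : Disjoint C V ∨ C ⊆ V ∨ V ⊆ C)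
    (hC : C ⊆ U ∪ V) (hne : C ≠ U ∪ V) : C ⊆ U ∨ C ⊆ V := by
  rcases hCU with hdU | hsubU | hsupU
  · exact Or.inr (hdU.left_le_of_le_sup_left hC)
  · exact Or.inl hsubU
  rcases hCV with hdV | hsubV | hsupV
  · exact Or.inl (hdV.left_le_of_le_sup_right hC)
  · exact Or.inr hsubV
  · exact absurd (hC.antisymm (union_subset hsupU hsupV)) hne

lemma IsBinaryClusterFamily.subset_or_subset_of_ne {X : Finset α} {F : Finset (Finset α)}
    (hF : IsBinaryClusterFamily X F) {U V C : Finset α} (hU : U ∈ F) (hV : V ∈ F)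
    (hUV : U ∪ V = X) (hC : C ∈ F) (hCX : C ≠ X) : C ⊆ U ∨ C ⊆ V := by
  subst hUV
  exact subset_or_subset_of_subset_union (hF.2.2.2.1 C hC U hU) (hF.2.2.2.1 C hC V hV)
    (hF.1 C hC).2 hCX

lemma biased_restrict_iff {F : Finset (Finset α)} {Y : Finset α} {x y z : α}
    (hx : x ∈ Y) (hy : y ∈ Y) (hz : z ∈ Y) :
    Biased (Restrict F Y) x y z ↔ Biased F x y z := by
  simp only [Biased, Restrict, mem_filter, mem_image]
  constructor
  · rintro ⟨_, ⟨⟨C, hC, rfl⟩, -⟩, hxC, hyC, hzC⟩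
    exact ⟨C, hC, (mem_inter.mp hxC).1, (mem_inter.mp hyC).1, fun h => hzC (mem_inter.mpr ⟨h, hz⟩)⟩
  · rintro ⟨C, hC, hxC, hyC, hzC⟩
    exact ⟨C ∩ Y, ⟨⟨C, hC, rfl⟩, x, mem_inter.mpr ⟨hxC, hx⟩⟩, mem_inter.mpr ⟨hxC, hx⟩,
      mem_inter.mpr ⟨hyC, hy⟩, fun h => hzC (mem_inter.mp h).1⟩

lemma Conflict.restrict {F G : Finset (Finset α)} {Y : Finset α} {a b c : α}
    (h : Conflict F G a b c) (hY : ({a, b, c} : Finset α) ⊆ Y) :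
    Conflict (Restrict F Y) (Restrict G Y) a b c := by
  obtain ⟨x, y, z, hxyz, hxor⟩ := h
  have hmem : ∀ w ∈ ({x, y, z} : Finset α), w ∈ Y := fun w hw => hY (hxyz ▸ hw)
  have hx := hmem x (by simp)
  have hy := hmem y (by simp)
  have hz := hmem z (by simp)
  refine ⟨x, y, z, hxyz, ?_⟩
  rwa [biased_restrict_iff hx hy hz, biased_restrict_iff hx hy hz]

lemma exists_mem_inters_of_subset {S U V U' V' : Finset α}
    (h : S ⊆ U ∨ S ⊆ V) (h' : S ⊆ U' ∨ S ⊆ V') :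
    ∃ Y ∈ ({U ∩ U', U ∩ V', V ∩ U', V ∩ V'} : Finset (Finset α)), S ⊆ Y := by
  rcases h with h | h <;> rcases h' with h' | h' <;> exact ⟨_, by simp, subset_inter h h'⟩

lemma eq_of_mem_of_mem_inters {U V U' V' Y Y' : Finset α} (hUV : Disjoint U V)
    (hUV' : Disjoint U' V')
    (hY : Y ∈ ({U ∩ U', U ∩ V', V ∩ U', V ∩ V'} : Finset (Finset α)))
    (hY' : Y' ∈ ({U ∩ U', U ∩ V', V ∩ U', V ∩ V'} : Finset (Finset α)))
    {a : α} (ha : a ∈ Y) (ha' : a ∈ Y') : Y' = Y := by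
  simp only [mem_insert, mem_singleton] at hY hY'
  rcases hY with rfl | rfl | rfl | rfl <;> rcases hY' with rfl | rfl | rfl | rfl <;>
    simp_all [disjoint_left]

end

theorem conflict_touches_root_or_recurses_general {α : Type*} [DecidableEq α]
    (X : Finset α) (F G : Finset (Finset α))
    (hF : IsBinaryClusterFamily X F) (hG : IsBinaryClusterFamily X G)
    (UP VP : Finset α) (hUP : UP ∈ F) (hVP : VP ∈ F)
    (hPd : Disjoint UP VP) (hPu : UP ∪ VP = X)
    (UQ VQ : Finset α) (hUQ : UQ ∈ G) (hVQ : VQ ∈ G)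
    (hQd : Disjoint UQ VQ) (hQu : UQ ∪ VQ = X)
    (a b c : α)
    (hconf : Conflict F G a b c) :
    (∀ C ∈ F, C ≠ X → ¬ (({a, b, c} : Finset α) ⊆ C)) ∨
    (∀ D ∈ G, D ≠ X → ¬ (({a, b, c} : Finset α) ⊆ D)) ∨
    (∃ Y ∈ ({UP ∩ UQ, UP ∩ VQ, VP ∩ UQ, VP ∩ VQ} : Finset (Finset α)),
      ({a, b, c} : Finset α) ⊆ Y ∧
      (∀ Y' ∈ ({UP ∩ UQ, UP ∩ VQ, VP ∩ UQ, VP ∩ VQ} : Finset (Finset α)),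
        ({a, b, c} : Finset α) ⊆ Y' → Y' = Y) ∧
      Conflict (Restrict F Y) (Restrict G Y) a b c) := by
  refine or_iff_not_imp_left.2 fun hC => or_iff_not_imp_left.2 fun hD => ?_
  push Not at hC hD
  obtain ⟨C, hC, hCX, hsC⟩ := hC
  obtain ⟨D, hD, hDX, hsD⟩ := hD
  have hP := (hF.subset_or_subset_of_ne hUP hVP hPu hC hCX).imp hsC.trans hsC.trans
  have hQ := (hG.subset_or_subset_of_ne hUQ hVQ hQu hD hDX).imp hsD.trans hsD.trans
  obtain ⟨Y, hY, hsY⟩ := exists_mem_inters_of_subset hP hQ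
  refine ⟨Y, hY, hsY, fun Y' hY' hsY' => ?_, hconf.restrict hsY⟩
  exact eq_of_mem_of_mem_inters hPd hQd hY hY' (hsY (Finset.mem_insert_self a _))
    (hsY' (Finset.mem_insert_self a _))

theorem conflict_touches_root_or_recurses {α : Type*} [DecidableEq α]
    (X : Finset α) (F G : Finset (Finset α))
    (hF : IsBinaryClusterFamily X F) (hG : IsBinaryClusterFamily X G)
    (UP VP : Finset α) (hUP : UP ∈ F) (hVP : VP ∈ F)
    (hUPn : UP.Nonempty) (hVPn : VP.Nonempty) (hPd : Disjoint UP VP) (hPu : UP ∪ VP = X)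
    (UQ VQ : Finset α) (hUQ : UQ ∈ G) (hVQ : VQ ∈ G)
    (hUQn : UQ.Nonempty) (hVQn : VQ.Nonempty) (hQd : Disjoint UQ VQ) (hQu : UQ ∪ VQ = X)
    (a b c : α) (hab : a ≠ b) (hac : a ≠ c) (hbc : b ≠ c)
    (hconf : Conflict F G a b c) :
    (∀ C ∈ F, C ≠ X → ¬ (({a, b, c} : Finset α) ⊆ C)) ∨
    (∀ D ∈ G, D ≠ X → ¬ (({a, b, c} : Finset α) ⊆ D)) ∨
    (∃ Y ∈ ({UP ∩ UQ, UP ∩ VQ, VP ∩ UQ, VP ∩ VQ} : Finset (Finset α)),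
      ({a, b, c} : Finset α) ⊆ Y ∧
      (∀ Y' ∈ ({UP ∩ UQ, UP ∩ VQ, VP ∩ UQ, VP ∩ VQ} : Finset (Finset α)),
        ({a, b, c} : Finset α) ⊆ Y' → Y' = Y) ∧
      Conflict (Restrict F Y) (Restrict G Y) a b c) :=
  conflict_touches_root_or_recurses_general X F G hF hG UP VP hUP hVP hPd hPu UQ VQ hUQ hVQ hQd hQu
    a b c hconf
end
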